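/- Under the quantile regression model Q_T(τ|Z) = exp(Zᵀβ₀(τ)) with T having continuous conditional distribution and C conditionally independent of T given Z, for each τ ∈ (0,1): E[ Z ( N(exp(Zᵀβ₀(τ))) - ∫₀^τ 1{X ≥ exp(Zᵀβ₀(u))} dH(u) ) ] = 0, where H(u) = -log(1-u) and N(t) = 1{X ≤ t, Δ = 1}. -/

import Mathlib

open MeasureTheory Set
open scoped ENNReal

theorem ph_aux (ν : Measure (ℝ × ℝ)) [IsProbabilityMeasure ν]
    (hindep : (ν.map Prod.fst).prod (ν.map Prod.snd) = ν)
    (q F : ℝ → ℝ)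
    (hF : ∀ t, F t = (ν {x | x.1 ≤ t}).toReal)
    (hcont : Continuous F)
    (hq : ∀ u ∈ Ioo (0:ℝ) 1, F (q u) = u)
    (τ : ℝ) (hτ : τ ∈ Ioo (0:ℝ) 1) :
    ∫ x : ℝ × ℝ,
        ((if min x.1 x.2 ≤ q τ ∧ x.1 ≤ x.2 then (1:ℝ) else 0)
          - ∫ u in Ioc (0:ℝ) τ, (if q u ≤ min x.1 x.2 then (1:ℝ) else 0) * (1 - u)⁻¹) ∂ν
      = 0 := by
  set μT := ν.map Prod.fst with hμT'
  set μC := ν.map Prod.snd with hμC'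
  haveI hμT : IsProbabilityMeasure μT := Measure.isProbabilityMeasure_map measurable_fst.aemeasurable
  haveI hμC : IsProbabilityMeasure μC := Measure.isProbabilityMeasure_map measurable_snd.aemeasurable
  have hFmono : Monotone F := by
    intro a b hab
    rw [hF, hF]
    exact ENNReal.toReal_mono (measure_ne_top _ _)
      (measure_mono (fun x hx => le_trans hx hab))
  have hFmin : ∀ a b : ℝ, F (min a b) = min (F a) (F b) := fun a b => hFmono.map_min
  have hF0 : ∀ t, 0 ≤ F t := fun t => by rw [hF]; exact ENNReal.toReal_nonneg
  have hμTIic : ∀ t, μT (Iic t) = ENNReal.ofReal (F t) := by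
    intro t
    rw [hμT', Measure.map_apply measurable_fst measurableSet_Iic]
    have : Prod.fst ⁻¹' Iic t = {x : ℝ × ℝ | x.1 ≤ t} := rfl
    rw [this, hF, ENNReal.ofReal_toReal (measure_ne_top _ _)]
  have L1 : ∀ u ∈ Ioo (0:ℝ) 1, ∀ c : ℝ, u < F c → q u ≤ c := by
    intro u hu c hc
    by_contra h
    push_neg at h
    have h2 : F c ≤ F (q u) := hFmono h.le
    rw [hq u hu] at h2
    exact absurd hc (not_lt.2 h2)
  have L2 : ∀ u ∈ Ioo (0:ℝ) 1, ∀ c : ℝ, q u ≤ c → u ≤ F c := by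
    intro u hu c hc
    have := hFmono hc
    rwa [hq u hu] at this
  have hupper : ∀ u ∈ Ioo (0:ℝ) 1, μT {t | u < F t} = ENNReal.ofReal (1 - u) := by
    intro u hu
    set S : Set ℝ := {t | F t ≤ u} with hS
    have hSc : IsClosed S := isClosed_le hcont continuous_const
    have hqu : q u ∈ S := by
      simp only [hS, mem_setOf_eq, hq u hu, le_refl]
    set τ' : ℝ := (u + 1) / 2 with hτ'def
    have hτ' : τ' ∈ Ioo (0:ℝ) 1 :=
      ⟨by simp only [hτ'def]; linarith [hu.1], by simp only [hτ'def]; linarith [hu.2]⟩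
    have huτ' : u < τ' := by simp only [hτ'def]; linarith [hu.2]
    have hbdd : BddAbove S := by
      refine ⟨q τ', fun s hs => ?_⟩
      by_contra h
      push_neg at h
      have h2 : F (q τ') ≤ F s := hFmono h.le
      rw [hq τ' hτ'] at h2
      exact absurd (h2.trans hs) (not_le.2 huτ')
    have hvmem : sSup S ∈ S := hSc.csSup_mem ⟨_, hqu⟩ hbdd
    have hSeq : S = Iic (sSup S) := by
      apply Subset.antisymm (fun s hs => le_csSup hbdd hs)
      intro t ht
      exact le_trans (hFmono ht) hvmem
    have hFv : F (sSup S) = u := by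
      refine le_antisymm hvmem ?_
      have := hFmono (le_csSup hbdd hqu)
      rwa [hq u hu] at this
    have hcompl : {t : ℝ | u < F t} = (Iic (sSup S))ᶜ := by
      rw [← hSeq]
      ext t
      simp only [hS, mem_setOf_eq, mem_compl_iff, mem_Iic, not_le]
    rw [hcompl, measure_compl measurableSet_Iic (measure_ne_top _ _), measure_univ,
      hμTIic, hFv, ENNReal.ofReal_sub 1 hu.1.le, ENNReal.ofReal_one]
  set m : ℝ × ℝ → ℝ := fun x => min x.1 x.2 with hm
  set A : ℝ × ℝ → ℝ := fun x => min (F (m x)) τ with hA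
  have hAτ : ∀ x, A x ≤ τ := fun x => min_le_right _ _
  set g : ℝ × ℝ → ℝ → ℝ := fun x u => (if u < A x then (1:ℝ) else 0) * (1 - u)⁻¹ with hg
  have hgnonneg : ∀ x u, 0 ≤ g x u := by
    intro x u
    by_cases h : u < A x
    · have hu1 : u < 1 := lt_of_lt_of_le h ((hAτ x).trans hτ.2.le)
      simp only [hg, if_pos h, one_mul]
      exact inv_nonneg.2 (by linarith)
    · simp [hg, if_neg h]
  have huIoo1 : ∀ u ∈ Ioc (0:ℝ) τ, u ∈ Ioo (0:ℝ) 1 := fun u hu =>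
    ⟨hu.1, lt_of_le_of_lt hu.2 hτ.2⟩
  have hI2 : ∀ x : ℝ × ℝ,
      (∫ u in Ioc (0:ℝ) τ, (if q u ≤ min x.1 x.2 then (1:ℝ) else 0) * (1 - u)⁻¹)
        = ∫ u in Ioc (0:ℝ) τ, g x u := by
    intro x
    apply integral_congr_ae
    have h1 : ∀ᵐ u : ℝ, u ≠ A x := by
      rw [ae_iff]
      have h2 : {u : ℝ | ¬ u ≠ A x} = {A x} := by ext u; simp
      rw [h2]
      exact measure_singleton _
    filter_upwards [ae_restrict_mem measurableSet_Ioc, ae_restrict_of_ae h1] with u hu hne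
    by_cases hlt : u < A x
    · have huc : u < F (m x) := lt_of_lt_of_le hlt (min_le_left _ _)
      have hqu : q u ≤ m x := L1 u (huIoo1 u hu) _ huc
      simp only [hm] at hqu
      simp [hg, hlt, hqu]
    · have hgt : A x < u := lt_of_le_of_ne (not_lt.1 hlt) (Ne.symm hne)
      have hnq : ¬ q u ≤ m x := by
        intro hc
        have h2 : u ≤ F (m x) := L2 u (huIoo1 u hu) _ hc
        exact absurd hgt (not_lt.2 (le_min h2 hu.2))
      simp only [hm] at hnq
      simp [hg, hlt, hnq]
  have hAcont : Continuous A :=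
    (hcont.comp (continuous_fst.min continuous_snd)).min continuous_const
  have hgmeas : Measurable fun p : (ℝ × ℝ) × ℝ => g p.1 p.2 := by
    apply Measurable.mul
    · exact Measurable.ite
        (measurableSet_lt measurable_snd (hAcont.measurable.comp measurable_fst))
        measurable_const measurable_const
    · exact (measurable_const.sub measurable_snd).inv
  haveI : IsFiniteMeasure (volume.restrict (Ioc (0:ℝ) τ)) :=
    ⟨by rw [Measure.restrict_apply_univ]; simp [Real.volume_Ioc]⟩
  have h1τ : (0:ℝ) < 1 - τ := by linarith [hτ.2]
  have hgbd : ∀ x u, g x u ≤ (1 - τ)⁻¹ := by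
    intro x u
    by_cases h : u < A x
    · have huτ : u ≤ τ := le_of_lt (lt_of_lt_of_le h (hAτ x))
      simp only [hg, if_pos h, one_mul]
      exact inv_anti₀ h1τ (by linarith)
    · simp only [hg, if_neg h, zero_mul]
      positivity
  have hgint : ∀ x, Integrable (g x) (volume.restrict (Ioc (0:ℝ) τ)) := by
    intro x
    apply Integrable.mono' (integrable_const ((1 - τ)⁻¹))
    · exact (hgmeas.comp measurable_prodMk_left).aestronglyMeasurable
    · filter_upwards with u
      rw [Real.norm_eq_abs, abs_of_nonneg (hgnonneg x u)]
      exact hgbd x u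
  set A₁ : Set (ℝ × ℝ) := {x | x.1 ≤ min (q τ) x.2} with hA₁
  have hA₁meas : MeasurableSet A₁ :=
    measurableSet_le measurable_fst (measurable_const.min measurable_snd)
  have hI1 : ∀ x : ℝ × ℝ, (if min x.1 x.2 ≤ q τ ∧ x.1 ≤ x.2 then (1:ℝ) else 0)
      = A₁.indicator (1 : ℝ × ℝ → ℝ) x := by
    intro x
    rw [Set.indicator_apply]
    refine if_congr ?_ rfl rfl
    simp only [hA₁, mem_setOf_eq, le_min_iff]
    constructor
    · rintro ⟨h1, h2⟩
      exact ⟨by rwa [min_eq_left h2] at h1, h2⟩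
    · rintro ⟨h1, h2⟩
      exact ⟨min_le_of_left_le h1, h2⟩
  have keyT : ∀ c : ℝ, ENNReal.ofReal (F (min (q τ) c)) = ENNReal.ofReal (min τ (F c)) := by
    intro c
    rw [hFmin, hq τ hτ]
  have hL : ∫ x, A₁.indicator (1 : ℝ × ℝ → ℝ) x ∂ν
      = (∫⁻ c, ENNReal.ofReal (min τ (F c)) ∂μC).toReal := by
    rw [integral_indicator_one hA₁meas, measureReal_def]
    congr 1
    calc ν A₁ = (μT.prod μC) A₁ := by rw [hindep]
      _ = ∫⁻ c, μT ((fun t => (t, c)) ⁻¹' A₁) ∂μC := Measure.prod_apply_symm hA₁meas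
      _ = ∫⁻ c, ENNReal.ofReal (min τ (F c)) ∂μC := by
          apply lintegral_congr
          intro c
          have hpre : (fun t => (t, c)) ⁻¹' A₁ = Iic (min (q τ) c) := rfl
          rw [hpre, hμTIic, keyT]
  have hI2nonneg : ∀ x, 0 ≤ ∫ u in Ioc (0:ℝ) τ, g x u := fun x =>
    integral_nonneg (hgnonneg x)
  have hI2meas : StronglyMeasurable fun x => ∫ u in Ioc (0:ℝ) τ, g x u :=
    hgmeas.stronglyMeasurable.integral_prod_right'
  have hR : ∫ x, (∫ u in Ioc (0:ℝ) τ, g x u) ∂ν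
      = (∫⁻ c, ENNReal.ofReal (min τ (F c)) ∂μC).toReal := by
    rw [integral_eq_lintegral_of_nonneg_ae (Filter.Eventually.of_forall hI2nonneg)
      hI2meas.aestronglyMeasurable]
    congr 1
    calc ∫⁻ x, ENNReal.ofReal (∫ u in Ioc (0:ℝ) τ, g x u) ∂ν
        = ∫⁻ x, (∫⁻ u in Ioc (0:ℝ) τ, ENNReal.ofReal (g x u)) ∂ν := by
          apply lintegral_congr
          intro x
          rw [ofReal_integral_eq_lintegral_ofReal (hgint x)
            (Filter.Eventually.of_forall (hgnonneg x))]
      _ = ∫⁻ u in Ioc (0:ℝ) τ, ∫⁻ x, ENNReal.ofReal (g x u) ∂ν := by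
          apply lintegral_lintegral_swap
          apply Measurable.aemeasurable
          exact ENNReal.measurable_ofReal.comp hgmeas
      _ = ∫⁻ u in Ioo (0:ℝ) τ, ∫⁻ x, ENNReal.ofReal (g x u) ∂ν := by
          rw [← Measure.restrict_congr_set Ioo_ae_eq_Ioc]
      _ = ∫⁻ u in Ioo (0:ℝ) τ, μC {c | u < F c} := by
          apply setLIntegral_congr_fun measurableSet_Ioo
          intro u hu
          beta_reduce
          have huIoo : u ∈ Ioo (0:ℝ) 1 := ⟨hu.1, hu.2.trans hτ.2⟩
          have h1u : (0:ℝ) < 1 - u := by linarith [huIoo.2]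
          have hsetm : MeasurableSet {x : ℝ × ℝ | u < A x} :=
            measurableSet_lt measurable_const hAcont.measurable
          have hptw : (fun x => ENNReal.ofReal (g x u))
              = Set.indicator {x : ℝ × ℝ | u < A x}
                  (fun _ => ENNReal.ofReal ((1 - u)⁻¹)) := by
            funext x
            rw [Set.indicator_apply]
            by_cases h : u < A x
            · simp [hg, h]
            · simp [hg, h]
          rw [hptw, lintegral_indicator hsetm, setLIntegral_const]
          have hset : {x : ℝ × ℝ | u < A x} = {t : ℝ | u < F t} ×ˢ {c : ℝ | u < F c} := by
            ext x
            simp only [mem_setOf_eq, mem_prod, hA, lt_min_iff, hm, hFmin]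
            constructor
            · rintro ⟨⟨h1, h2⟩, _⟩
              exact ⟨h1, h2⟩
            · rintro ⟨h1, h2⟩
              exact ⟨⟨h1, h2⟩, hu.2⟩
          rw [hset, ← hindep, Measure.prod_prod, hupper u huIoo, ← mul_assoc,
            ← ENNReal.ofReal_mul (by positivity), inv_mul_cancel₀ h1u.ne',
            ENNReal.ofReal_one, one_mul]
      _ = ∫⁻ u in Ioo (0:ℝ) τ, ∫⁻ c, (if u < F c then (1:ℝ≥0∞) else 0) ∂μC := by
          apply lintegral_congr
          intro u
          rw [← lintegral_indicator_one (measurableSet_lt measurable_const hcont.measurable)]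
          apply lintegral_congr
          intro c
          rw [Set.indicator_apply]
          simp [mem_setOf_eq]
      _ = ∫⁻ c, (∫⁻ u in Ioo (0:ℝ) τ, (if u < F c then (1:ℝ≥0∞) else 0)) ∂μC := by
          apply lintegral_lintegral_swap
          apply Measurable.aemeasurable
          exact Measurable.ite
            (measurableSet_lt measurable_fst (hcont.measurable.comp measurable_snd))
            measurable_const measurable_const
      _ = ∫⁻ c, ENNReal.ofReal (min τ (F c)) ∂μC := by
          apply lintegral_congr
          intro c
          have h1 : (fun u : ℝ => if u < F c then (1:ℝ≥0∞) else 0)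
              = Set.indicator (Iio (F c)) 1 := by
            funext u
            rw [Set.indicator_apply]
            simp [mem_Iio]
          rw [h1, lintegral_indicator_one measurableSet_Iio,
            Measure.restrict_apply measurableSet_Iio]
          have h2 : Iio (F c) ∩ Ioo (0:ℝ) τ = Ioo (0:ℝ) (min τ (F c)) := by
            ext u
            simp only [mem_inter_iff, mem_Iio, mem_Ioo, lt_min_iff]
            tauto
          rw [h2, Real.volume_Ioo, sub_zero]
  have hIntI1 : Integrable (fun x => A₁.indicator (1 : ℝ × ℝ → ℝ) x) ν :=
    (integrable_const 1).indicator hA₁meas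
  have hIntI2 : Integrable (fun x => ∫ u in Ioc (0:ℝ) τ, g x u) ν := by
    apply Integrable.mono'
      (integrable_const ((1 - τ)⁻¹ * ((volume.restrict (Ioc (0:ℝ) τ)) univ).toReal))
    · exact hI2meas.aestronglyMeasurable
    · filter_upwards with x
      exact norm_integral_le_of_norm_le_const (Filter.Eventually.of_forall fun u => by
        rw [Real.norm_eq_abs, abs_of_nonneg (hgnonneg x u)]; exact hgbd x u)
  calc ∫ x : ℝ × ℝ, ((if min x.1 x.2 ≤ q τ ∧ x.1 ≤ x.2 then (1:ℝ) else 0)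
          - ∫ u in Ioc (0:ℝ) τ, (if q u ≤ min x.1 x.2 then (1:ℝ) else 0) * (1 - u)⁻¹) ∂ν
      = ∫ x, (A₁.indicator (1 : ℝ × ℝ → ℝ) x - ∫ u in Ioc (0:ℝ) τ, g x u) ∂ν := by
        apply integral_congr_ae
        filter_upwards with x
        rw [hI1 x, hI2 x]
    _ = (∫ x, A₁.indicator (1 : ℝ × ℝ → ℝ) x ∂ν) - ∫ x, (∫ u in Ioc (0:ℝ) τ, g x u) ∂ν :=
        integral_sub hIntI1 hIntI2
    _ = 0 := by rw [hL, hR, sub_self]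

open scoped RealInnerProductSpace

/-- Unbiasedness of the martingale-based estimating function of Peng and Huang (2008):
under the quantile regression model `Q_T(τ|Z=z) = exp(zᵀβ₀(τ))` (expressed via the
conditional law `ν z` of `(T,C)` given `Z = z`, under which `T` and `C` are independent and
`F_T(exp(zᵀβ₀(τ))|z) = τ`), with `u ↦ exp(zᵀβ₀(u))` increasing and `Z` bounded,
`E[ Z ( N(exp(Zᵀβ₀(τ))) - ∫₀^τ 1{X ≥ exp(Zᵀβ₀(u))} dH(u) ) ] = 0` for `τ ∈ (0,1)`,
where `H(u) = -log(1-u)` (so `dH(u) = (1-u)⁻¹ du`), `X = min(T,C)`, `Δ = 1{T ≤ C}`,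
and `N(t) = 1{X ≤ t, Δ = 1}`. -/
theorem stmt13 {p : ℕ}
    (μZ : Measure (EuclideanSpace ℝ (Fin p))) [IsProbabilityMeasure μZ]
    (Mbd : ℝ) (hbd : ∀ᵐ z ∂μZ, ‖z‖ ≤ Mbd)
    (ν : EuclideanSpace ℝ (Fin p) → Measure (ℝ × ℝ))
    (hνprob : ∀ z, IsProbabilityMeasure (ν z))
    (hpos : ∀ z, (ν z) {x | ¬(0 < x.1 ∧ 0 < x.2)} = 0)
    (hindep : ∀ z, ((ν z).map Prod.fst).prod ((ν z).map Prod.snd) = ν z)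
    (β₀ : ℝ → EuclideanSpace ℝ (Fin p))
    (FT : EuclideanSpace ℝ (Fin p) → ℝ → ℝ)
    (hFT : ∀ z t, FT z t = ((ν z) {x | x.1 ≤ t}).toReal)
    (hcont : ∀ z, Continuous (FT z))
    (hq : ∀ z, ∀ τ ∈ Set.Ioo (0:ℝ) 1, FT z (Real.exp ⟪z, β₀ τ⟫) = τ)
    (hmono : ∀ z, MonotoneOn (fun u => Real.exp ⟪z, β₀ u⟫) (Set.Ioo (0:ℝ) 1))
    (τ : ℝ) (hτ : τ ∈ Set.Ioo (0:ℝ) 1) :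
    ∫ z, (∫ x : ℝ × ℝ,
        ((if min x.1 x.2 ≤ Real.exp ⟪z, β₀ τ⟫ ∧ x.1 ≤ x.2 then (1:ℝ) else 0)
          - ∫ u in Set.Ioc (0:ℝ) τ,
              (if Real.exp ⟪z, β₀ u⟫ ≤ min x.1 x.2 then (1:ℝ) else 0) * (1 - u)⁻¹)
        ∂(ν z)) • z ∂μZ = (0 : EuclideanSpace ℝ (Fin p)) := by
  have key : ∀ z : EuclideanSpace ℝ (Fin p),
      (∫ x : ℝ × ℝ,
        ((if min x.1 x.2 ≤ Real.exp ⟪z, β₀ τ⟫ ∧ x.1 ≤ x.2 then (1:ℝ) else 0)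
          - ∫ u in Set.Ioc (0:ℝ) τ,
              (if Real.exp ⟪z, β₀ u⟫ ≤ min x.1 x.2 then (1:ℝ) else 0) * (1 - u)⁻¹)
        ∂(ν z)) = 0 := by
    intro z
    haveI := hνprob z
    exact ph_aux (ν z) (hindep z) (fun u => Real.exp ⟪z, β₀ u⟫) (FT z)
      (hFT z) (hcont z) (hq z) τ hτ
  have hzero : (fun z : EuclideanSpace ℝ (Fin p) => (∫ x : ℝ × ℝ,
        ((if min x.1 x.2 ≤ Real.exp ⟪z, β₀ τ⟫ ∧ x.1 ≤ x.2 then (1:ℝ) else 0)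
          - ∫ u in Set.Ioc (0:ℝ) τ,
              (if Real.exp ⟪z, β₀ u⟫ ≤ min x.1 x.2 then (1:ℝ) else 0) * (1 - u)⁻¹)
        ∂(ν z)) • z) = fun _ => (0 : EuclideanSpace ℝ (Fin p)) := by
    funext z
    rw [key z, zero_smul]
  rw [hzero, integral_zero]
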